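/- Let φ: 𝔻 → 𝔻 be holomorphic and suppose the composition operator C_φ on H²₂(𝔻) is complex symmetric with respect to the conjugation J defined by (Jf)(z) = conj(f(conj z)). Then φ(0) = 0 and φ(z) = φ′(0)·z for all z ∈ 𝔻. -/

import Mathlib

open FormalMultilinearSeries Metric Filter Topology

/-!
The kernel depends only on the product of its arguments: `kfun u v = g (u * v)` with
`g t = ∑ cₙ tⁿ`, and `g'(0) = c₁ ≠ 0`. Putting `w = 0` in the symmetry relation gives
`g (φ(0) z) = g 0`; differentiating in `z` at `0` yields `c₁ φ(0) = 0`. For fixed `z`,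
differentiating `g (w φ(z)) = g (φ(w) z)` in `w` at `0`, where both arguments vanish because
`φ(0) = 0`, yields `c₁ φ(z) = c₁ φ′(0) z`.
-/

/-- `kfun u v = K_{conj u}(v) = ∑ ((n+1)/(n+2)⁵)(u·v)ⁿ`, where `K_w` is the
reproducing kernel of `H²₂(𝔻)`. -/
noncomputable def kfun (u v : ℂ) : ℂ :=
  ∑' n : ℕ, (((n : ℂ) + 1) / ((n : ℂ) + 2) ^ 5) * (u * v) ^ n

theorem hasDerivAt_tsum_mul_pow_zero {𝕜 : Type*} [NontriviallyNormedField 𝕜] [CompleteSpace 𝕜]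
    {c : ℕ → 𝕜} (hc : 0 < (ofScalars 𝕜 c).radius) :
    HasDerivAt (fun t : 𝕜 => ∑' n, c n * t ^ n) (c 1) 0 := by
  have h := ((ofScalars 𝕜 c).hasFPowerSeriesOnBall hc).hasFPowerSeriesAt.hasDerivAt
  rw [← ofScalarsSum, ofScalarsSum_eq_tsum] at h
  simpa [ofScalars_apply_eq] using h

noncomputable def kernelCoeff (n : ℕ) : ℂ := ((n : ℂ) + 1) / ((n : ℂ) + 2) ^ 5

theorem kernelCoeff_one_ne_zero : kernelCoeff 1 ≠ 0 := by
  norm_num [kernelCoeff]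

theorem norm_kernelCoeff_le_one (n : ℕ) : ‖kernelCoeff n‖ ≤ 1 := by
  have hcast : kernelCoeff n = (((n : ℝ) + 1) / ((n : ℝ) + 2) ^ 5 : ℝ) := by
    push_cast [kernelCoeff]; rfl
  rw [hcast, Complex.norm_real, Real.norm_of_nonneg (by positivity), div_le_one (by positivity)]
  calc (n : ℝ) + 1 ≤ (n : ℝ) + 2 := by linarith
    _ ≤ ((n : ℝ) + 2) ^ 5 := le_self_pow₀ (by linarith [n.cast_nonneg (α := ℝ)]) (by norm_num)

theorem one_le_radius_ofScalars_kernelCoeff : 1 ≤ (ofScalars ℂ kernelCoeff).radius := by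
  have h := (ofScalars ℂ kernelCoeff).le_radius_of_bound 1 (r := 1) fun n => by
    simpa [ofScalars_norm] using norm_kernelCoeff_le_one n
  simpa using h

theorem HasDerivAt.kfun {f g : ℂ → ℂ} {f' g' x : ℂ} (hf : HasDerivAt f f' x)
    (hg : HasDerivAt g g' x) (hfg : f x * g x = 0) :
    HasDerivAt (fun y => kfun (f y) (g y)) (kernelCoeff 1 * (f' * g x + f x * g')) x := by
  have hk := hasDerivAt_tsum_mul_pow_zero
    (one_pos.trans_le one_le_radius_ofScalars_kernelCoeff)
  exact hk.comp_of_eq x (hf.mul hg) hfg.symm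

theorem stmt16_general (φ : ℂ → ℂ)
    (hdiff : DifferentiableOn ℂ φ (Metric.ball (0 : ℂ) 1))
    (hsym : ∀ z ∈ Metric.ball (0 : ℂ) 1, ∀ w ∈ Metric.ball (0 : ℂ) 1,
      kfun w (φ z) = kfun (φ w) z) :
    φ 0 = 0 ∧ ∀ z ∈ Metric.ball (0 : ℂ) 1, φ z = deriv φ 0 * z := by
  have h0 : (0 : ℂ) ∈ ball (0 : ℂ) 1 := mem_ball_self one_pos
  have hnhds : ball (0 : ℂ) 1 ∈ 𝓝 0 := ball_mem_nhds 0 one_pos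
  have hφ : HasDerivAt φ (deriv φ 0) 0 := (hdiff.differentiableAt hnhds).hasDerivAt
  have hφ0 : φ 0 = 0 := by
    have hL := (hasDerivAt_const (0 : ℂ) (0 : ℂ)).kfun hφ (zero_mul _)
    have hR := (hasDerivAt_const (0 : ℂ) (φ 0)).kfun (hasDerivAt_id 0) (mul_zero _)
    have heq := hL.unique (hR.congr_of_eventuallyEq
      (eventually_of_mem hnhds fun z hz => hsym z hz 0 h0))
    simpa [kernelCoeff_one_ne_zero] using heq.symm
  refine ⟨hφ0, fun z hz => ?_⟩
  have hL := (hasDerivAt_id' (0 : ℂ)).kfun (hasDerivAt_const 0 (φ z)) (zero_mul _)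
  have hR := hφ.kfun (hasDerivAt_const 0 z) (by rw [hφ0, zero_mul])
  have heq := hL.unique (hR.congr_of_eventuallyEq
    (eventually_of_mem hnhds fun w hw => hsym z hz w hw))
  simpa [hφ0, kernelCoeff_one_ne_zero] using heq

/-- If `φ : 𝔻 → 𝔻` is holomorphic and `C_φ` on `H²₂(𝔻)` is complex symmetric with
the conjugation `J`, `(Jf)(z) = conj(f(conj z))` — equivalently
`K_{conj w}(φ(z)) = K_{conj(φ(w))}(z)` for all `w, z ∈ 𝔻` — then `φ(0) = 0` and
`φ(z) = φ′(0)·z` on `𝔻`. -/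
theorem stmt16 (φ : ℂ → ℂ)
    (hmap : Set.MapsTo φ (Metric.ball (0 : ℂ) 1) (Metric.ball (0 : ℂ) 1))
    (hdiff : DifferentiableOn ℂ φ (Metric.ball (0 : ℂ) 1))
    (hsym : ∀ z ∈ Metric.ball (0 : ℂ) 1, ∀ w ∈ Metric.ball (0 : ℂ) 1,
      kfun w (φ z) = kfun (φ w) z) :
    φ 0 = 0 ∧ ∀ z ∈ Metric.ball (0 : ℂ) 1, φ z = deriv φ 0 * z :=
  stmt16_general φ hdiff hsym
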